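/- arXiv:1205.2900 — 6 statements merged into one kernel-verified Lean document; each statement's English description precedes it below -/
import Mathlib

section
/- For a prime power q, integers l ≥ 0 and i ≥ 0, if l is not congruent to -1 modulo q, then the binomial coefficient C(l, q(i+1)-1) is congruent to 0 modulo the characteristic p of F_q (i.e., equals 0 in F_q). -/
lemma aux_mod_div (p m : ℕ) (hp : 2 ≤ p) (hm : 1 ≤ m) :
    (p * m - 1) % p = p - 1 ∧ (p * m - 1) / p = m - 1 := by
  obtain ⟨m', rfl⟩ : ∃ m', m = m' + 1 := ⟨m - 1, by omega⟩
  have h : p * (m' + 1) - 1 = p * m' + (p - 1) := by rw [Nat.mul_succ]; omega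
  rw [h]
  constructor
  · rw [Nat.mul_add_mod]
    exact Nat.mod_eq_of_lt (by omega)
  · rw [Nat.mul_add_div (by omega)]
    rw [Nat.div_eq_of_lt (by omega)]
    omega

lemma aux_main (p : ℕ) (hp : p.Prime) :
    ∀ s l m : ℕ, 1 ≤ m → ¬ p ^ (s + 1) ∣ (l + 1) →
      ((l.choose (p ^ (s + 1) * m - 1) : ℕ) : ZMod p) = 0 := by
  haveI : Fact p.Prime := ⟨hp⟩
  have hp2 := hp.two_le
  intro s
  induction s with
  | zero =>
    intro l m hm hdvd
    simp only [zero_add, pow_one] at hdvd ⊢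
    obtain ⟨h1, h2⟩ := aux_mod_div p m hp2 hm
    have hmod := (Choose.choose_modEq_choose_mod_mul_choose_div_nat (p := p)
      (n := l) (k := p * m - 1))
    rw [← ZMod.natCast_eq_natCast_iff] at hmod
    rw [hmod, h1]
    have hlm : l % p < p - 1 := by
      have h3 : l % p < p := Nat.mod_lt _ (by omega)
      rcases Nat.lt_or_ge (l % p) (p - 1) with h | h
      · exact h
      · exfalso
        have : l % p = p - 1 := by omega
        apply hdvd
        have := Nat.div_add_mod l p
        refine ⟨l / p + 1, ?_⟩
        rw [Nat.mul_add]
        omega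
    rw [Nat.choose_eq_zero_of_lt hlm]
    simp
  | succ s ih =>
    intro l m hm hdvd
    have hmpos : 1 ≤ p ^ (s + 1) * m := Nat.one_le_iff_ne_zero.mpr
      (by positivity)
    have hkey : p ^ (s + 1 + 1) * m - 1 = p * (p ^ (s + 1) * m) - 1 := by
      ring_nf
    obtain ⟨h1, h2⟩ := aux_mod_div p (p ^ (s + 1) * m) hp2 hmpos
    have hmod := (Choose.choose_modEq_choose_mod_mul_choose_div_nat (p := p)
      (n := l) (k := p * (p ^ (s + 1) * m) - 1))
    rw [← ZMod.natCast_eq_natCast_iff] at hmod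
    rw [hkey, hmod, h1, h2]
    by_cases hc : l % p = p - 1
    · -- l ≡ -1 mod p; reduce to l / p
      have hd : ¬ p ^ (s + 1) ∣ (l / p + 1) := by
        intro ⟨c, hcc⟩
        apply hdvd
        refine ⟨c, ?_⟩
        have hdm := Nat.div_add_mod l p
        have hms : p * (l / p + 1) = p * (l / p) + p := Nat.mul_succ _ _
        have hle : l + 1 = p * (l / p + 1) := by omega
        rw [hle, hcc, pow_succ]
        ring
      have hih := ih (l / p) m hm hd
      push_cast [hih]
      ring
    · have hlt : l % p < p - 1 := by
        have : l % p < p := Nat.mod_lt _ (by omega)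
        omega
      rw [Nat.choose_eq_zero_of_lt hlt]
      simp

theorem stmt_0 (p s q : ℕ) (hp : p.Prime) (hs : 1 ≤ s) (hq : q = p ^ s)
    (l i : ℕ) (hl : ¬ q ∣ (l + 1)) :
    ((l.choose (q * (i + 1) - 1) : ℕ) : ZMod p) = 0 := by
  obtain ⟨s', rfl⟩ : ∃ s', s = s' + 1 := ⟨s - 1, by omega⟩
  subst hq
  exact aux_main p hp s' l (i + 1) (by omega) hl
end

section
/- For a prime power q, integers l ≥ 0 and i ≥ 0, if l ≡ -1 (mod q), then C(l, q(i+1)-1) ≡ C((l+1)/q - 1, i) modulo the characteristic p of F_q. -/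
/-!
Write `l + 1 = q (c + 1)`. In base `p`, both `q (c + 1) - 1` and `q (i + 1) - 1` end in `s` digits
equal to `p - 1`, and deleting them leaves `c` and `i`. Each of those trailing digits contributes
a factor `C(p - 1, p - 1) = 1` in Lucas's theorem, so one step of Lucas per digit reduces
`C(l, q (i + 1) - 1)` to `C(c, i)` modulo `p`.
-/

namespace Choose

variable {p : ℕ} [Fact p.Prime]

theorem choose_mul_add_pred_mul_add_pred_modEq_choose_nat (a b : ℕ) :
    Nat.choose (p * a + (p - 1)) (p * b + (p - 1)) ≡ Nat.choose a b [MOD p] := by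
  have hpos : 0 < p := Fact.out (p := p.Prime) |>.pos
  have hlt : p - 1 < p := Nat.sub_lt hpos one_pos
  refine choose_modEq_choose_mod_mul_choose_div_nat.trans ?_
  rw [Nat.mul_add_mod, Nat.mul_add_mod, Nat.mod_eq_of_lt hlt, Nat.mul_add_div hpos,
    Nat.mul_add_div hpos, Nat.div_eq_of_lt hlt, Nat.choose_self, one_mul, add_zero, add_zero]

theorem choose_pow_mul_sub_one_pow_mul_sub_one_modEq_choose_nat (k a b : ℕ) :
    Nat.choose (p ^ k * (a + 1) - 1) (p ^ k * (b + 1) - 1) ≡ Nat.choose a b [MOD p] := by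
  induction k with
  | zero => simp [Nat.ModEq.refl]
  | succ k ih =>
    have hpos : 0 < p := Fact.out (p := p.Prime) |>.pos
    have peel : ∀ c, p ^ (k + 1) * (c + 1) - 1 = p * (p ^ k * (c + 1) - 1) + (p - 1) := by
      intro c
      obtain ⟨m, hm⟩ : ∃ m, p ^ k * (c + 1) = m + 1 :=
        Nat.exists_eq_add_one.mpr (by positivity)
      rw [pow_succ', mul_assoc, hm, Nat.add_sub_cancel, Nat.mul_succ]
      omega
    rw [peel a, peel b]
    exact (choose_mul_add_pred_mul_add_pred_modEq_choose_nat _ _).trans ih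

end Choose

theorem stmt_1_general (p s q : ℕ) (hp : p.Prime) (hq : q = p ^ s)
    (l i : ℕ) (hl : q ∣ (l + 1)) :
    ((l.choose (q * (i + 1) - 1) : ℕ) : ZMod p)
      = ((((l + 1) / q - 1).choose i : ℕ) : ZMod p) := by
  have := Fact.mk hp
  obtain ⟨m, hm⟩ := hl
  obtain ⟨c, rfl⟩ : ∃ c, m = c + 1 := Nat.exists_eq_succ_of_ne_zero (by rintro rfl; simp at hm)
  have hq_pos : 0 < q := hq ▸ pow_pos hp.pos s
  have hl_eq : l = q * (c + 1) - 1 := by omega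
  have hdiv : (l + 1) / q = c + 1 := by rw [hm, Nat.mul_div_cancel_left _ hq_pos]
  rw [hdiv, Nat.add_sub_cancel, hl_eq, hq]
  exact (ZMod.natCast_eq_natCast_iff _ _ _).mpr
    (Choose.choose_pow_mul_sub_one_pow_mul_sub_one_modEq_choose_nat s c i)

theorem stmt_1 (p s q : ℕ) (hp : p.Prime) (hs : 1 ≤ s) (hq : q = p ^ s)
    (l i : ℕ) (hl : q ∣ (l + 1)) :
    ((l.choose (q * (i + 1) - 1) : ℕ) : ZMod p)
      = ((((l + 1) / q - 1).choose i : ℕ) : ZMod p) :=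
  stmt_1_general p s q hp hq l i hl
end

section
/- Let q ≥ 2 and r ≤ q - 1 be positive integers. Let P = Σ a_i θ^i ∈ F_q[θ] be the polynomial with a_{i(q-1)-1} = -1 for i = 1,...,r and all other coefficients zero. Then the r×r matrix M over F_q[T] defined by M_{i,j} = a_{iq-j} T - a_{iq-j-1} (1 ≤ i,j ≤ r, with a_* = 0 for indices outside [0, r(q-1)-1]) is upper triangular with all diagonal entries equal to 1, and hence det(I_r - M·U) = (1-U)^r in F_q[T][U]; in particular (U-1)^r divides det(I_r - M·U). -/
open Polynomial
open scoped Classical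

lemma no_t_aux (q r : ℕ) (hq2 : 2 ≤ q) (hrq : r ≤ q - 1)
    (t i' j' c : ℤ) (ht1 : 1 ≤ t) (htr : t ≤ r) (hi1 : 1 ≤ i') (hir : i' ≤ r)
    (hj1 : 1 ≤ j') (hji : j' ≤ i') (hc : c = 0 ∨ c = 1) (hne : j' < i' ∨ c = 1)
    (heq : t * ((q : ℤ) - 1) = i' * (q : ℤ) - j' + c) : False := by
  have hQ : (2 : ℤ) ≤ (q : ℤ) := by exact_mod_cast hq2
  have hrQ : (r : ℤ) ≤ (q : ℤ) - 1 := by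
    have : r + 1 ≤ q := by omega
    have := (Nat.cast_le (α := ℤ)).mpr this
    push_cast at this; linarith
  rcases le_or_gt t i' with h | h
  · have h1 : t * ((q : ℤ) - 1) ≤ i' * ((q : ℤ) - 1) :=
      mul_le_mul_of_nonneg_right h (by linarith)
    rcases hc with rfl | rfl
    · rcases hne with hne | hne
      · nlinarith
      · norm_num at hne
    · nlinarith
  · have h1 : (i' + 1) * ((q : ℤ) - 1) ≤ t * ((q : ℤ) - 1) :=
      mul_le_mul_of_nonneg_right (by linarith) (by linarith)
    rcases hc with rfl | rfl <;> nlinarith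

theorem stmt_6 (q r : ℕ) (hq2 : 2 ≤ q) (hr : 1 ≤ r) (hrq : r ≤ q - 1)
    (F : Type) [Field F] [Fintype F] (hF : Fintype.card F = q)
    (a : ℤ → F)
    (ha : ∀ z : ℤ, a z =
      if ∃ t ∈ Finset.Icc 1 r, z + 1 = (t : ℤ) * ((q : ℤ) - 1) then -1 else 0)
    (M : Matrix (Fin r) (Fin r) (Polynomial F))
    (hM : ∀ i j : Fin r, M i j =
      C (a (((i : ℕ) + 1 : ℤ) * (q : ℤ) - ((j : ℕ) + 1 : ℤ))) * X
        - C (a (((i : ℕ) + 1 : ℤ) * (q : ℤ) - ((j : ℕ) + 1 : ℤ) - 1))) :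
    (∀ i j : Fin r, (j : ℕ) < (i : ℕ) → M i j = 0) ∧
    (∀ i : Fin r, M i i = 1) ∧
    Matrix.det (1 - (X : Polynomial (Polynomial F)) • (M.map C))
      = (1 - X) ^ r := by
  have hlow : ∀ i j : Fin r, (j : ℕ) < (i : ℕ) → M i j = 0 := by
    intro i j hij
    rw [hM, ha, ha, if_neg, if_neg]
    · simp
    · rintro ⟨t, htmem, heq⟩
      rw [Finset.mem_Icc] at htmem
      refine no_t_aux q r hq2 hrq t ((i : ℕ) + 1) ((j : ℕ) + 1) 0
        (by exact_mod_cast htmem.1) (by exact_mod_cast htmem.2)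
        (by push_cast; omega) (by push_cast; omega) (by push_cast; omega)
        (by push_cast; omega) (Or.inl rfl) (Or.inl (by push_cast; omega)) ?_
      linarith [heq]
    · rintro ⟨t, htmem, heq⟩
      rw [Finset.mem_Icc] at htmem
      refine no_t_aux q r hq2 hrq t ((i : ℕ) + 1) ((j : ℕ) + 1) 1
        (by exact_mod_cast htmem.1) (by exact_mod_cast htmem.2)
        (by push_cast; omega) (by push_cast; omega) (by push_cast; omega)
        (by push_cast; omega) (Or.inr rfl) (Or.inl (by push_cast; omega)) ?_
      linarith [heq]
  have hdiag : ∀ i : Fin r, M i i = 1 := by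
    intro i
    rw [hM, ha, ha, if_neg, if_pos]
    · simp
    · refine ⟨(i : ℕ) + 1, Finset.mem_Icc.mpr ⟨by omega, by omega⟩, ?_⟩
      push_cast; ring
    · rintro ⟨t, htmem, heq⟩
      rw [Finset.mem_Icc] at htmem
      refine no_t_aux q r hq2 hrq t ((i : ℕ) + 1) ((i : ℕ) + 1) 1
        (by exact_mod_cast htmem.1) (by exact_mod_cast htmem.2)
        (by push_cast; omega) (by push_cast; omega) (by push_cast; omega)
        (by push_cast; omega) (Or.inr rfl) (Or.inr rfl) ?_
      linarith [heq]
  refine ⟨hlow, hdiag, ?_⟩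
  have htri : (1 - (X : Polynomial (Polynomial F)) • (M.map C)).BlockTriangular id := by
    intro i j hij
    have hij' : (j : ℕ) < (i : ℕ) := hij
    have hne : i ≠ j := by
      intro h; subst h; exact lt_irrefl _ hij'
    simp [Matrix.sub_apply, Matrix.smul_apply, Matrix.one_apply_ne hne,
      Matrix.map_apply, hlow i j hij']
  rw [Matrix.det_of_upperTriangular htri]
  have hd : ∀ i : Fin r,
      (1 - (X : Polynomial (Polynomial F)) • (M.map C)) i i = 1 - X := by
    intro i
    simp [Matrix.sub_apply, Matrix.smul_apply, Matrix.one_apply_eq,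
      Matrix.map_apply, hdiag i, mul_one]
  simp [hd, Finset.prod_const, Finset.card_univ]
end

section
/- Let q be a prime power, m, k positive integers, and a_0,...,a_m ∈ F_q with a_* := 0 for indices outside [0,m]. Define the k×k matrix M(k) over F_q[T] by M(k)_{i,j} = a_{iq-j} T - a_{iq-j-1} for 1 ≤ i,j ≤ k. If k ≥ (m+1)/(q-1), then det(I_k - M(k)·U) = det(I_{k+1} - M(k+1)·U) in F_q[T][U]; that is, the characteristic-type polynomial stabilizes for k ≥ (m+1)/(q-1). -/
open Polynomial

theorem stmt_7 (q m k : ℕ) (hq2 : 2 ≤ q) (hm : 1 ≤ m) (hk : 1 ≤ k)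
    (F : Type) [Field F] [Fintype F] (hF : Fintype.card F = q)
    (a : ℤ → F) (h0 : ∀ z : ℤ, z < 0 → a z = 0) (hma : ∀ z : ℤ, (m : ℤ) < z → a z = 0)
    (M : (K : ℕ) → Matrix (Fin K) (Fin K) (Polynomial F))
    (hM : ∀ K, ∀ i j : Fin K, M K i j =
      C (a (((i : ℕ) + 1 : ℤ) * (q : ℤ) - ((j : ℕ) + 1 : ℤ))) * X
        - C (a (((i : ℕ) + 1 : ℤ) * (q : ℤ) - ((j : ℕ) + 1 : ℤ) - 1)))
    (hkm : m + 1 ≤ k * (q - 1)) :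
    Matrix.det (1 - (X : Polynomial (Polynomial F)) • ((M k).map C))
      = Matrix.det (1 - (X : Polynomial (Polynomial F)) • ((M (k + 1)).map C)) := by
  set A : Matrix (Fin (k + 1)) (Fin (k + 1)) (Polynomial (Polynomial F)) :=
    1 - (X : Polynomial (Polynomial F)) • ((M (k + 1)).map C) with hA
  -- key arithmetic fact
  have hprod : (m + k + 3 : ℕ) ≤ (k + 1) * q := by
    obtain ⟨d, rfl⟩ : ∃ d, q = d + 2 := ⟨q - 2, by omega⟩
    have hkm' : m + 1 ≤ k * (d + 1) := by simpa using hkm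
    nlinarith [hkm', hk]
  have hprod' : ((m : ℤ) + k + 3) ≤ ((k : ℤ) + 1) * q := by exact_mod_cast hprod
  -- last row of M (k+1) is zero
  have hrow : ∀ j : Fin (k + 1), M (k + 1) (Fin.last k) j = 0 := by
    intro j
    rw [hM]
    have hj : ((j : ℕ) : ℤ) ≤ k := by exact_mod_cast Fin.le_last j
    have hlk : ((Fin.last k : Fin (k+1)) : ℕ) = k := rfl
    rw [hlk]
    rw [hma _ (by push_cast; linarith), hma _ (by push_cast; linarith)]
    simp
  -- so last row of A is the standard basis vector
  have hlastA : ∀ j : Fin (k + 1), A (Fin.last k) j = if Fin.last k = j then 1 else 0 := by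
    intro j
    simp [hA, Matrix.sub_apply, Matrix.smul_apply, Matrix.one_apply, Matrix.map_apply, hrow j]
  -- submatrix is the k-matrix
  have hsub : A.submatrix Fin.castSucc Fin.castSucc
      = 1 - (X : Polynomial (Polynomial F)) • ((M k).map C) := by
    ext i j
    have hMeq : M (k + 1) i.castSucc j.castSucc = M k i j := by
      rw [hM, hM]
      simp
    simp [hA, Matrix.sub_apply, Matrix.smul_apply, Matrix.one_apply, Matrix.map_apply,
      Matrix.submatrix_apply, hMeq, Fin.castSucc_inj]
  rw [Matrix.det_succ_row A (Fin.last k)]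
  rw [Finset.sum_eq_single (Fin.last k)]
  · rw [hlastA, if_pos rfl, Fin.succAbove_last, hsub]
    have : (-1 : Polynomial (Polynomial F)) ^ ((Fin.last k : ℕ) + (Fin.last k : ℕ)) = 1 :=
      by rw [← two_mul, pow_mul]; norm_num
    rw [this]
    ring
  · intro j _ hj
    rw [hlastA, if_neg (Ne.symm hj)]
    ring
  · intro h
    exact absurd (Finset.mem_univ _) h
end

section
/- Let q be a prime power and let a_0, ..., a_m ∈ F_q with m ≡ -n (mod q-1) and a_m = (-1)^n, where n ≥ 1. Set k = (m+n)/(q-1) and let M be the k×k matrix over F_q[T] with M_{i,j} = Σ_{l=0}^n T^{n-l}(-1)^l C(n,l) a_{iq-j-l} (indices 1 ≤ i,j ≤ k, a_* = 0 outside [0,m]). Then in row k, all entries M_{k,j} with j < k are zero, M_{k,k} = (-1)^n a_m = 1, and consequently (1 - U) divides det(I_k - M·U) in F_q[T][U]; in particular det(I_k - M·U) vanishes at U = 1. -/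
open Polynomial

theorem stmt_12 (q n m k : ℕ) (hq2 : 2 ≤ q) (hn : 1 ≤ n)
    (hdvd : (q - 1) ∣ (m + n)) (hk : k = (m + n) / (q - 1))
    (F : Type) [Field F] [Fintype F] (hF : Fintype.card F = q)
    (a : ℤ → F) (h0 : ∀ z : ℤ, z < 0 → a z = 0) (hma : ∀ z : ℤ, (m : ℤ) < z → a z = 0)
    (ham : a (m : ℤ) = (-1) ^ n)
    (M : Matrix (Fin k) (Fin k) (Polynomial F))
    (hM : ∀ i j : Fin k, M i j =
      ∑ l ∈ Finset.range (n + 1),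
        C ((-1) ^ l * (n.choose l : F)
            * a (((i : ℕ) + 1 : ℤ) * (q : ℤ) - ((j : ℕ) + 1 : ℤ) - (l : ℤ)))
          * X ^ (n - l)) :
    (∀ i j : Fin k, (i : ℕ) + 1 = k → (j : ℕ) < (i : ℕ) → M i j = 0) ∧
    (∀ i : Fin k, (i : ℕ) + 1 = k → M i i = 1) ∧
    ((1 - X : Polynomial (Polynomial F)) ∣
        Matrix.det (1 - (X : Polynomial (Polynomial F)) • (M.map C))) ∧
    Polynomial.eval 1
        (Matrix.det (1 - (X : Polynomial (Polynomial F)) • (M.map C))) = 0 := by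
  have hkq : k * (q - 1) = m + n := by rw [hk]; exact Nat.div_mul_cancel hdvd
  have hzn : k * q = m + n + k := by
    have hq1 : q - 1 + 1 = q := by omega
    calc k * q = k * (q - 1 + 1) := by rw [hq1]
    _ = k * (q - 1) + k := by ring
    _ = m + n + k := by rw [hkq]
  have hz : (k : ℤ) * q = m + n + k := by exact_mod_cast hzn
  have hk1 : 1 ≤ k := by
    rcases Nat.eq_zero_or_pos k with h | h
    · rw [h] at hzn; simp at hzn; omega
    · exact h
  -- first claim
  have h1 : ∀ i j : Fin k, (i : ℕ) + 1 = k → (j : ℕ) < (i : ℕ) → M i j = 0 := by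
    intro i j hi hij
    rw [hM i j]
    apply Finset.sum_eq_zero
    intro l hl
    have hl' : l ≤ n := by
      have := Finset.mem_range.mp hl; omega
    have hi' : ((i : ℕ) : ℤ) + 1 = k := by exact_mod_cast hi
    have hj' : ((j : ℕ) : ℤ) + 2 ≤ k := by
      have : (j : ℕ) + 2 ≤ k := by omega
      exact_mod_cast this
    have hln : (l : ℤ) ≤ n := by exact_mod_cast hl'
    have hidx : (m : ℤ) < ((i : ℕ) + 1 : ℤ) * q - ((j : ℕ) + 1 : ℤ) - l := by
      rw [hi']
      linarith [hz]
    rw [hma _ hidx]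
    simp
  -- second claim
  have h2 : ∀ i : Fin k, (i : ℕ) + 1 = k → M i i = 1 := by
    intro i hi
    have hi' : ((i : ℕ) : ℤ) + 1 = k := by exact_mod_cast hi
    rw [hM i i]
    rw [Finset.sum_eq_single n]
    · have hidx : ((i : ℕ) + 1 : ℤ) * q - ((i : ℕ) + 1 : ℤ) - n = m := by
        rw [hi']; linarith [hz]
      rw [hidx, ham, Nat.choose_self, Nat.sub_self]
      have : ((-1 : F) ^ n) * 1 * ((-1 : F) ^ n) = 1 := by
        rw [mul_one, ← pow_add]
        exact Even.neg_one_pow ⟨n, rfl⟩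
      push_cast
      rw [this]
      simp
    · intro l hl hln
      have hl' : l < n := by
        have := Finset.mem_range.mp hl; omega
      have hlz : (l : ℤ) < n := by exact_mod_cast hl'
      have hidx : (m : ℤ) < ((i : ℕ) + 1 : ℤ) * q - ((i : ℕ) + 1 : ℤ) - l := by
        rw [hi']; linarith [hz]
      rw [hma _ hidx]
      simp
    · intro h
      exact absurd (Finset.self_mem_range_succ n) h
  refine ⟨h1, h2, ?_, ?_⟩
  · -- divisibility; first prove eval 1 det = 0
    have heval : Polynomial.eval 1
        (Matrix.det (1 - (X : Polynomial (Polynomial F)) • (M.map C))) = 0 := by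
      rw [show (Polynomial.eval 1 : Polynomial (Polynomial F) → Polynomial F)
        = ⇑(evalRingHom (1 : Polynomial F)) from rfl]
      rw [RingHom.map_det]
      set i0 : Fin k := ⟨k - 1, by omega⟩ with hi0
      have hi0k : (i0 : ℕ) + 1 = k := by simp [hi0]; omega
      apply Matrix.det_eq_zero_of_row_eq_zero i0
      intro j
      simp only [RingHom.mapMatrix_apply, Matrix.map_apply, Matrix.sub_apply, Matrix.smul_apply,
        Matrix.one_apply, Matrix.map_apply, smul_eq_mul]
      by_cases hji : j = i0
      · subst hji
        simp [h2 i0 hi0k]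
      · have hji' : (j : ℕ) < (i0 : ℕ) := by
          have : (j : ℕ) < k := j.isLt
          have hne : (j : ℕ) ≠ (i0 : ℕ) := fun h => hji (Fin.ext h)
          simp only [hi0] at hne ⊢
          omega
        rw [h1 i0 j hi0k hji']
        simp [Ne.symm hji]
    have hroot : IsRoot (Matrix.det (1 - (X : Polynomial (Polynomial F)) • (M.map C))) 1 :=
      heval
    have hdvd1 : (X - Polynomial.C (1 : Polynomial F)) ∣
        Matrix.det (1 - (X : Polynomial (Polynomial F)) • (M.map C)) :=
      dvd_iff_isRoot.mpr hroot
    have : (1 - X : Polynomial (Polynomial F)) = -(X - Polynomial.C 1) := by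
      rw [map_one]; ring
    rw [this]
    exact (neg_dvd).mpr hdvd1
  · rw [show (Polynomial.eval 1 : Polynomial (Polynomial F) → Polynomial F)
      = ⇑(evalRingHom (1 : Polynomial F)) from rfl]
    rw [RingHom.map_det]
    set i0 : Fin k := ⟨k - 1, by omega⟩ with hi0
    have hi0k : (i0 : ℕ) + 1 = k := by simp [hi0]; omega
    apply Matrix.det_eq_zero_of_row_eq_zero i0
    intro j
    simp only [RingHom.mapMatrix_apply, Matrix.map_apply, Matrix.sub_apply, Matrix.smul_apply,
      Matrix.one_apply, smul_eq_mul]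
    by_cases hji : j = i0
    · subst hji
      simp [h2 i0 hi0k]
    · have hji' : (j : ℕ) < (i0 : ℕ) := by
        have : (j : ℕ) < k := j.isLt
        have hne : (j : ℕ) ≠ (i0 : ℕ) := fun h => hji (Fin.ext h)
        simp only [hi0] at hne ⊢
        omega
      rw [h1 i0 j hi0k hji']
      simp [Ne.symm hji]
end

section
/- Let q be a prime power, d ∈ F_q, and let W be the infinite upper-triangular matrix over F_q indexed by nonnegative integers with W_{ij} = C(j,i) d^{j-i} for j ≥ i (and 0 otherwise). For j ≥ 0, let 𝔐_j = Σ_{i≥0} ε_{i, q(i+1)-1-j} (where ε_{ab} is the elementary matrix, zero if the column index is negative). Then 𝔐_0 W = W 𝔐_0; i.e., the 'q-power extraction' matrix 𝔐_0 commutes with the Pascal shift matrix W. -/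
/-!
Row `i` of `𝔐₀ W` is row `q i + (q - 1)` of `W`, and column `l` of `W 𝔐₀` is column `m` of `W`
if `l = q m + (q - 1)` and zero otherwise. Both cases are Lucas's theorem in base `q = p ^ s`,
`C(n, k) ≡ C(n mod q, k mod q) · C(⌊n / q⌋, ⌊k / q⌋) (mod p)`, which follows from the prime case
by induction on `s`: it gives `C(q m + q - 1, q i + q - 1) ≡ C(m, i)`, and `C(l, q i + q - 1) ≡ 0`
when `l mod q < q - 1`. The powers of `d` match because `d ^ q = d` in `𝔽_q`.
-/

namespace Choose

variable {p : ℕ} [Fact p.Prime]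

theorem choose_modEq_choose_mod_mul_choose_div_pow_nat (a : ℕ) {n k : ℕ} :
    n.choose k ≡ (n % p ^ a).choose (k % p ^ a) * (n / p ^ a).choose (k / p ^ a) [MOD p] := by
  induction a generalizing n k with
  | zero => simp only [pow_zero, Nat.mod_one, Nat.div_one, Nat.choose_self, one_mul]; rfl
  | succ a ih =>
    -- Applying the induction hypothesis to `n % p ^ (a + 1)` regroups the lowest `a + 1` digits.
    have low : (n % p ^ (a + 1)).choose (k % p ^ (a + 1)) ≡
        (n % p ^ a).choose (k % p ^ a) * (n / p ^ a % p).choose (k / p ^ a % p) [MOD p] := by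
      simpa only [pow_succ, Nat.mod_mul_right_mod, Nat.mod_mul_right_div_self] using
        ih (n := n % p ^ (a + 1)) (k := k % p ^ (a + 1))
    calc n.choose k
        ≡ (n % p ^ a).choose (k % p ^ a) * (n / p ^ a).choose (k / p ^ a) [MOD p] := ih
      _ ≡ (n % p ^ a).choose (k % p ^ a) * ((n / p ^ a % p).choose (k / p ^ a % p) *
            (n / p ^ a / p).choose (k / p ^ a / p)) [MOD p] :=
        Nat.ModEq.mul_left _ choose_modEq_choose_mod_mul_choose_div_nat
      _ ≡ (n % p ^ (a + 1)).choose (k % p ^ (a + 1)) *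
            (n / p ^ (a + 1)).choose (k / p ^ (a + 1)) [MOD p] := by
        rw [← mul_assoc, pow_succ, ← Nat.div_div_eq_div_mul, ← Nat.div_div_eq_div_mul]
        exact Nat.ModEq.mul_right _ low.symm

theorem choose_mul_add_pred_modEq (a m i : ℕ) :
    (p ^ a * m + (p ^ a - 1)).choose (p ^ a * i + (p ^ a - 1)) ≡ m.choose i [MOD p] := by
  have hq : 0 < p ^ a := pow_pos (Fact.out : p.Prime).pos a
  have hlt : p ^ a - 1 < p ^ a := by omega
  refine (choose_modEq_choose_mod_mul_choose_div_pow_nat a).trans ?_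
  simp only [Nat.mul_add_mod, Nat.mul_add_div hq, Nat.mod_eq_of_lt hlt, Nat.div_eq_of_lt hlt,
    Nat.choose_self, add_zero, one_mul, Nat.ModEq.refl]

theorem choose_mul_add_pred_modEq_zero (a i : ℕ) {n : ℕ} (hn : n % p ^ a ≠ p ^ a - 1) :
    n.choose (p ^ a * i + (p ^ a - 1)) ≡ 0 [MOD p] := by
  have hq : 0 < p ^ a := pow_pos (Fact.out : p.Prime).pos a
  have hlt : p ^ a - 1 < p ^ a := by omega
  have hn' : n % p ^ a < p ^ a - 1 := by have := Nat.mod_lt n hq; omega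
  refine (choose_modEq_choose_mod_mul_choose_div_pow_nat a).trans ?_
  rw [Nat.mul_add_mod, Nat.mod_eq_of_lt hlt, Nat.choose_eq_zero_of_lt hn', zero_mul]

end Choose

def pascalShift {R : Type*} [Semiring R] (d : R) (i j : ℕ) : R :=
  if i ≤ j then (j.choose i : R) * d ^ (j - i) else 0

section pascalShift

variable {R : Type*} [Ring R] {p : ℕ} [Fact p.Prime] [CharP R p] {a : ℕ}

theorem pascalShift_mul_add_pred {d : R} (hd : d ^ p ^ a = d) (i m : ℕ) :
    pascalShift d (p ^ a * i + (p ^ a - 1)) (p ^ a * m + (p ^ a - 1)) = pascalShift d i m := by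
  have hq : 0 < p ^ a := pow_pos (Fact.out : p.Prime).pos a
  have hle : p ^ a * i + (p ^ a - 1) ≤ p ^ a * m + (p ^ a - 1) ↔ i ≤ m := by
    rw [Nat.add_le_add_iff_right, Nat.mul_le_mul_left_iff hq]
  unfold pascalShift
  rw [if_congr hle rfl rfl]
  split_ifs with him
  · have hexp : p ^ a * m + (p ^ a - 1) - (p ^ a * i + (p ^ a - 1)) = p ^ a * (m - i) := by
      rw [Nat.add_sub_add_right, Nat.mul_sub]
    rw [(CharP.natCast_eq_natCast R p).mpr (Choose.choose_mul_add_pred_modEq a m i), hexp,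
      pow_mul, hd]
  · rfl

theorem pascalShift_mul_add_pred_eq_zero (d : R) (i : ℕ) {l : ℕ} (hl : l % p ^ a ≠ p ^ a - 1) :
    pascalShift d (p ^ a * i + (p ^ a - 1)) l = 0 := by
  unfold pascalShift
  split_ifs
  · rw [(CharP.cast_eq_zero_iff R p _).mpr
      (Nat.modEq_zero_iff_dvd.mp (Choose.choose_mul_add_pred_modEq_zero a i hl)), zero_mul]
  · rfl

end pascalShift

theorem Nat.add_one_eq_mul_add_one_iff {q : ℕ} (hq : 0 < q) {l t : ℕ} :
    l + 1 = q * (t + 1) ↔ l = q * t + (q - 1) := by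
  rw [mul_add_one]
  omega

theorem Nat.mul_add_pred_mod {q : ℕ} (hq : 0 < q) (t : ℕ) : (q * t + (q - 1)) % q = q - 1 := by
  rw [Nat.mul_add_mod, Nat.mod_eq_of_lt (by omega)]

theorem stmt_15_general (p s q : ℕ) (hp : p.Prime) (hq : q = p ^ s)
    (F : Type) [Field F] [Fintype F] (hF : Fintype.card F = q)
    (d : F)
    (W M0 : ℕ → ℕ → F)
    (hW : ∀ i j, W i j = if i ≤ j then (j.choose i : F) * d ^ (j - i) else 0)
    (hM0 : ∀ i l, M0 i l = if l + 1 = q * (i + 1) then 1 else 0) :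
    ∀ i l : ℕ,
      (∑ t ∈ Finset.range (q * (i + 1) + l + 1), M0 i t * W t l)
        = ∑ t ∈ Finset.range (q * (i + 1) + l + 1), W i t * M0 t l := by
  have : Fact p.Prime := ⟨hp⟩
  have : CharP F p := charP_of_card_eq_prime_pow (hF.trans hq)
  have hd : d ^ p ^ s = d := hq ▸ hF ▸ FiniteField.pow_card d
  obtain rfl : W = pascalShift d := funext fun i ↦ funext (hW i)
  subst hq
  have hpos : 0 < p ^ s := pow_pos hp.pos s
  intro i l
  simp only [hM0, Nat.add_one_eq_mul_add_one_iff hpos, ite_mul, mul_ite, one_mul, zero_mul, mul_one,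
    mul_zero, Finset.sum_ite_eq', Finset.mem_range]
  rw [if_pos (by rw [mul_add_one]; omega)]
  by_cases hl : l % p ^ s = p ^ s - 1
  · obtain ⟨m, rfl⟩ : ∃ m, l = p ^ s * m + (p ^ s - 1) := ⟨l / p ^ s, by rw [← hl, Nat.div_add_mod]⟩
    simp only [add_left_inj, mul_right_inj' hpos.ne', Finset.sum_ite_eq, Finset.mem_range]
    rw [if_pos (by nlinarith), pascalShift_mul_add_pred hd]
  · refine (pascalShift_mul_add_pred_eq_zero d i hl).trans
      (Finset.sum_eq_zero fun t _ ↦ if_neg ?_).symm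
    rintro rfl
    exact hl (Nat.mul_add_pred_mod hpos t)

theorem stmt_15 (p s q : ℕ) (hp : p.Prime) (hs : 1 ≤ s) (hq : q = p ^ s)
    (F : Type) [Field F] [Fintype F] (hF : Fintype.card F = q)
    (d : F)
    (W M0 : ℕ → ℕ → F)
    (hW : ∀ i j, W i j = if i ≤ j then (j.choose i : F) * d ^ (j - i) else 0)
    (hM0 : ∀ i l, M0 i l = if l + 1 = q * (i + 1) then 1 else 0) :
    ∀ i l : ℕ,
      (∑ t ∈ Finset.range (q * (i + 1) + l + 1), M0 i t * W t l)
        = ∑ t ∈ Finset.range (q * (i + 1) + l + 1), W i t * M0 t l :=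
  stmt_15_general p s q hp hq F hF d W M0 hW hM0
end
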